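/- arXiv:math/0404308 — 4 statements merged into one kernel-verified Lean document; each statement's English description precedes it below -/
import Mathlib

section
/- For a permutation σ in the symmetric group S_n, let ♯σ denote its number of cycles (including fixed points). For any integer N > n, the element Φ^N = Σ_{σ ∈ S_n} N^{♯σ}·σ of the group algebra ℂ[S_n] is invertible. -/
/-!
With the Jucys–Murphy elements `J_k = Σ_{i<k} (i k)`, `Φ^N = ∏_k (N + J_k)`, by induction on `k`:
a permutation of `{0, …, k}` either fixes `k` or is uniquely `τ (i k)` with `i < k` and `τ`
fixing `k`, and right multiplication by `(i k)` inserts `k` into the cycle of `i`, so `τ (i k)`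
has one cycle less than `τ`. Each factor `N + J_k` is invertible in the finite-dimensional algebra
`ℂ[S_n]` because it is diagonally dominant: if `v (N + J_k) = 0`, comparing the coefficient of `v`
of largest modulus with the `k < N` coefficients it is a sum of forces it to vanish.
-/

/-- The number of cycles of a permutation of `Fin n`, counting fixed points. -/
def cycleCount {n : ℕ} (σ : Equiv.Perm (Fin n)) : ℕ :=
  σ.cycleType.card + (n - σ.support.card)

open Equiv Equiv.Perm Finset MonoidAlgebra

section DiagonallyDominant

variable {𝕜 G ι : Type*} [NormedField 𝕜] [Group G] [Finite G]

theorem MonoidAlgebra.eq_zero_of_mul_single_one_add_sum_single_eq_zero {c : 𝕜} {s : Finset ι}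
    {x : ι → G} {b : ι → 𝕜} (h : ∑ i ∈ s, ‖b i‖ < ‖c‖) {v : MonoidAlgebra 𝕜 G}
    (hv : v * (single 1 c + ∑ i ∈ s, single (x i) (b i)) = 0) : v = 0 := by
  obtain ⟨g₀, hg₀⟩ := Finite.exists_max fun g ↦ ‖v.coeff g‖
  have hcoeff : v.coeff g₀ * c = -∑ i ∈ s, v.coeff (g₀ * (x i)⁻¹) * b i := by
    have := congr_arg (fun w ↦ w.coeff g₀) hv
    simp only [mul_add, mul_sum, coeff_add, coeff_sum, Finsupp.add_apply, Finsupp.finsetSum_apply,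
      coeff_mul_single_apply, inv_one, mul_one, coeff_zero, Finsupp.zero_apply] at this
    exact eq_neg_of_add_eq_zero_left this
  have hle : ‖v.coeff g₀‖ * ‖c‖ ≤ ‖v.coeff g₀‖ * ∑ i ∈ s, ‖b i‖ :=
    calc ‖v.coeff g₀‖ * ‖c‖ = ‖∑ i ∈ s, v.coeff (g₀ * (x i)⁻¹) * b i‖ := by
          rw [← norm_mul, hcoeff, norm_neg]
      _ ≤ ∑ i ∈ s, ‖v.coeff (g₀ * (x i)⁻¹)‖ * ‖b i‖ := by
          simpa only [norm_mul] using norm_sum_le s fun i ↦ v.coeff (g₀ * (x i)⁻¹) * b i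
      _ ≤ ∑ i ∈ s, ‖v.coeff g₀‖ * ‖b i‖ := by gcongr; exact hg₀ _
      _ = ‖v.coeff g₀‖ * ∑ i ∈ s, ‖b i‖ := (mul_sum ..).symm
  have hg₀zero : ‖v.coeff g₀‖ = 0 := by
    by_contra hne
    exact (le_of_mul_le_mul_left hle ((norm_nonneg _).lt_of_ne' hne)).not_gt h
  ext g
  simpa using norm_le_zero_iff.mp ((hg₀ g).trans hg₀zero.le)

/-- The group algebra is finite-dimensional, so right regularity suffices. -/
theorem MonoidAlgebra.isUnit_single_one_add_sum_single {c : 𝕜} {s : Finset ι}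
    {x : ι → G} {b : ι → 𝕜} (h : ∑ i ∈ s, ‖b i‖ < ‖c‖) :
    IsUnit (single 1 c + ∑ i ∈ s, single (x i) (b i)) := by
  have : IsArtinianRing (MonoidAlgebra 𝕜 G) := .of_finite 𝕜 _
  rw [IsArtinianRing.isUnit_iff_isRightRegular, isRightRegular_iff_left_eq_zero_of_mul]
  exact fun v ↦ eq_zero_of_mul_single_one_add_sum_single_eq_zero h

end DiagonallyDominant

namespace Equiv.Perm

variable {α : Type*} [DecidableEq α]

theorem sameCycle_mul_swap_pow_apply {c : Perm α} {i k : α} (hk : c k = k) (hik : i ≠ k)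
    (j : ℕ) : SameCycle (c * swap i k) i ((c ^ j) i) := by
  induction j with
  | zero => exact SameCycle.refl _ _
  | succ j ih =>
    rw [pow_succ', mul_apply]
    by_cases hj : (c ^ j) i = i
    · have : c i = (c * swap i k) ((c * swap i k) i) := by simp [hk]
      rw [hj, this, sameCycle_apply_right, sameCycle_apply_right]
    · have hjk : (c ^ j) i ≠ k := fun h ↦
        hik ((c ^ j).injective (h.trans (pow_apply_eq_self_of_apply_eq_self hk j).symm))
      have : c ((c ^ j) i) = (c * swap i k) ((c ^ j) i) := by
        simp [swap_apply_of_ne_of_ne hj hjk]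
      rwa [this, sameCycle_apply_right]

/-- Multiplying a cycle on the right by `swap i k`, with `k` a fixed point, inserts `k` into the
cycle right after `i`. -/
theorem IsCycle.mul_swap [Finite α] {c : Perm α} (hc : c.IsCycle) {i k : α} (hi : c i ≠ i)
    (hk : c k = k) : (c * swap i k).IsCycle := by
  have hik : i ≠ k := by rintro rfl; exact hi hk
  refine ⟨i, by simpa [hk] using hik.symm, fun y hy ↦ ?_⟩
  rcases eq_or_ne y k with rfl | hyk
  · exact ⟨1, by simp [hk]⟩
  have hcy : c y ≠ y := by
    rcases eq_or_ne y i with rfl | hyi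
    · exact hi
    · simpa [swap_apply_of_ne_of_ne hyi hyk] using hy
  obtain ⟨j, -, rfl⟩ := (hc.sameCycle hi hcy).exists_pow_eq'
  exact sameCycle_mul_swap_pow_apply hk hik j

theorem disjoint_swap_of_apply_eq {f : Perm α} {i k : α} (hi : f i = i) (hk : f k = k) :
    Disjoint f (swap i k) := by
  intro x
  rcases eq_or_ne x i with rfl | hxi
  · exact .inl hi
  rcases eq_or_ne x k with rfl | hxk
  · exact .inl hk
  · exact .inr (swap_apply_of_ne_of_ne hxi hxk)

variable [Fintype α] {f : Perm α} {i k : α}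

theorem support_mul_swap_of_apply_ne (hi : f i ≠ i) (hk : f k = k) :
    (f * swap i k).support = insert k f.support := by
  have hik : i ≠ k := by rintro rfl; exact hi hk
  have hfik : f i ≠ k := fun h ↦ hik (f.injective (h.trans hk.symm))
  ext x
  simp only [mem_support, mem_insert, mul_apply]
  rcases eq_or_ne x k with rfl | hxk
  · simpa using hfik
  rcases eq_or_ne x i with rfl | hxi
  · simp [hk, hik.symm, hi]
  · simp [swap_apply_of_ne_of_ne hxi hxk, hxk]

theorem card_support_mul_swap_of_apply_ne (hi : f i ≠ i) (hk : f k = k) :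
    #(f * swap i k).support = #f.support + 1 := by
  rw [support_mul_swap_of_apply_ne hi hk, card_insert_of_notMem (by simpa using hk)]

theorem card_support_mul_swap_of_apply_eq (hi : f i = i) (hk : f k = k) (hik : i ≠ k) :
    #(f * swap i k).support = #f.support + 2 := by
  rw [(disjoint_swap_of_apply_eq hi hk).card_support_mul, card_support_swap hik]

theorem card_cycleType_mul_swap_of_apply_eq (hi : f i = i) (hk : f k = k) (hik : i ≠ k) :
    (f * swap i k).cycleType.card = f.cycleType.card + 1 := by
  rw [(disjoint_swap_of_apply_eq hi hk).cycleType_mul, Multiset.card_add,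
    card_cycleType_eq_one.mpr (isCycle_swap hik)]

/-- Split off the cycle `c` of `f` through `i`; right multiplication by `swap i k` only enlarges
`c`, which stays a single cycle. -/
theorem card_cycleType_mul_swap_of_apply_ne (hi : f i ≠ i) (hk : f k = k) :
    (f * swap i k).cycleType.card = f.cycleType.card := by
  set c := f.cycleOf i
  have hc : c.IsCycle := isCycle_cycleOf f hi
  have hci : c i ≠ i := by simpa [c] using hi
  have hck : c k = k := notMem_support.mp fun h ↦ by simpa [hk] using support_cycleOf_le f i h
  have hdisj : Disjoint (f * c⁻¹) c := disjoint_mul_inv_of_mem_cycleFactorsFinset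
    (cycleOf_mem_cycleFactorsFinset_iff.mpr (mem_support.mpr hi))
  have hdisj' : Disjoint (f * c⁻¹) (c * swap i k) := by
    have hfck : (f * c⁻¹) k = k := by rw [mul_apply, inv_eq_iff_eq.mpr hck.symm, hk]
    rw [disjoint_iff_disjoint_support] at hdisj ⊢
    rw [support_mul_swap_of_apply_ne hci hck, Finset.disjoint_insert_right]
    exact ⟨by simpa using hfck, hdisj⟩
  calc (f * swap i k).cycleType.card
      = ((f * c⁻¹) * (c * swap i k)).cycleType.card := by rw [mul_assoc, inv_mul_cancel_left]
    _ = ((f * c⁻¹) * c).cycleType.card := by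
      rw [hdisj.cycleType_mul, hdisj'.cycleType_mul, Multiset.card_add, Multiset.card_add,
        card_cycleType_eq_one.mpr hc, card_cycleType_eq_one.mpr (hc.mul_swap hci hck)]
    _ = f.cycleType.card := by rw [inv_mul_cancel_right]

end Equiv.Perm

@[simp]
theorem cycleCount_one {n : ℕ} : cycleCount (1 : Perm (Fin n)) = n := by
  simp [cycleCount]

theorem cycleCount_mul_swap {n : ℕ} {f : Perm (Fin n)} {i k : Fin n} (hk : f k = k)
    (hik : i ≠ k) : cycleCount (f * swap i k) + 1 = cycleCount f := by
  have hle : #(f * swap i k).support ≤ n := by simpa using card_le_univ (f * swap i k).support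
  unfold cycleCount
  by_cases hi : f i = i
  · rw [card_cycleType_mul_swap_of_apply_eq hi hk hik,
      card_support_mul_swap_of_apply_eq hi hk hik] at *
    omega
  · rw [card_cycleType_mul_swap_of_apply_ne hi hk, card_support_mul_swap_of_apply_ne hi hk] at *
    omega

/-- The copy of `S_m` inside `S_n`. -/
def permsBelow (n m : ℕ) : Finset (Perm (Fin n)) :=
  {σ | ∀ x : Fin n, m ≤ (x : ℕ) → σ x = x}

section PermsBelow

variable {n : ℕ} {σ : Perm (Fin n)}

@[simp]
theorem mem_permsBelow {m : ℕ} : σ ∈ permsBelow n m ↔ ∀ x : Fin n, m ≤ (x : ℕ) → σ x = x := by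
  simp [permsBelow]

@[simp]
theorem permsBelow_zero : permsBelow n 0 = {1} := by
  ext σ
  simp [Perm.ext_iff]

@[simp]
theorem permsBelow_self : permsBelow n n = univ := by
  ext σ
  simp [fun x : Fin n ↦ x.isLt.not_ge]

theorem inv_apply_le_of_mem_permsBelow_succ {k : Fin n} (hσ : σ ∈ permsBelow n (k + 1)) :
    σ⁻¹ k ≤ k := by
  by_contra! hlt
  have hfix : σ (σ⁻¹ k) = σ⁻¹ k := mem_permsBelow.mp hσ _ hlt
  simp only [coe_inv, apply_symm_apply] at hfix
  exact hlt.ne hfix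

theorem mem_permsBelow_succ_and_inv_apply_eq_self_iff {k : Fin n} :
    σ ∈ permsBelow n (k + 1) ∧ σ⁻¹ k = k ↔ σ ∈ permsBelow n k := by
  simp only [mem_permsBelow, inv_eq_iff_eq, eq_comm (a := k)]
  refine ⟨fun ⟨hσ, hk⟩ x hx ↦ ?_, fun hσ ↦ ⟨fun x hx ↦ hσ x (by omega), hσ k le_rfl⟩⟩
  rcases eq_or_ne x k with rfl | hxk
  · exact hk
  · exact hσ x (by have := Fin.val_ne_of_ne hxk; omega)

theorem mem_permsBelow_succ_and_inv_apply_eq_iff {i k : Fin n} (hik : i < k) :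
    σ ∈ permsBelow n (k + 1) ∧ σ⁻¹ k = i ↔ σ * swap i k ∈ permsBelow n k := by
  simp only [mem_permsBelow, inv_eq_iff_eq, mul_apply]
  have hik' : (i : ℕ) < k := hik
  constructor
  · rintro ⟨hσ, hk⟩ x hx
    rcases eq_or_ne x k with rfl | hxk
    · simp [hk]
    · rw [swap_apply_of_ne_of_ne (by rintro rfl; omega) hxk]
      exact hσ x (by have := Fin.val_ne_of_ne hxk; omega)
  · intro hσ
    have hx : ∀ x : Fin n, (k : ℕ) + 1 ≤ x → σ x = x := fun x hx ↦ by
      simpa [swap_apply_of_ne_of_ne (a := i) (b := k) (x := x) (by rintro rfl; omega)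
        (by rintro rfl; omega)] using hσ x (by omega)
    exact ⟨hx, by simpa using (hσ k le_rfl).symm⟩

end PermsBelow

section Factorization

variable {R : Type*} [CommSemiring R] {n : ℕ}

/-- The cycles are counted in `S_n`, so this is `N ^ (n - m)` times `Φ^N` of `S_m`. -/
noncomputable def phiBelow (n : ℕ) (N : R) (m : ℕ) : MonoidAlgebra R (Perm (Fin n)) :=
  ∑ σ ∈ permsBelow n m, single σ (N ^ cycleCount σ)

noncomputable def jucysMurphy (R : Type*) [Semiring R] {n : ℕ} (k : Fin n) :
    MonoidAlgebra R (Perm (Fin n)) :=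
  ∑ i ∈ Iio k, single (swap i k) 1

theorem sum_mul_swap_permsBelow (N : R) {i k : Fin n} (hik : i < k) :
    ∑ σ ∈ permsBelow n (k + 1) with σ⁻¹ k = i, single σ (N * N ^ cycleCount σ) =
      ∑ τ ∈ permsBelow n k, single (τ * swap i k) (N ^ cycleCount τ) := by
  refine sum_nbij' (· * swap i k) (· * swap i k) (fun σ hσ ↦ ?_) (fun τ hτ ↦ ?_)
    (fun σ _ ↦ by simp [mul_assoc]) (fun τ _ ↦ by simp [mul_assoc]) (fun σ hσ ↦ ?_)
  · exact (mem_permsBelow_succ_and_inv_apply_eq_iff hik).mp (mem_filter.mp hσ)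
  · rw [mem_filter, mem_permsBelow_succ_and_inv_apply_eq_iff hik, mul_swap_mul_self]
    exact hτ
  · have hσk : (σ * swap i k) k = k := by
      rw [mul_apply, swap_apply_right, ← inv_eq_iff_eq.mp (mem_filter.mp hσ).2]
    have hcc := cycleCount_mul_swap hσk hik.ne
    rw [mul_swap_mul_self] at hcc ⊢
    rw [← hcc, pow_succ']

theorem phiBelow_zero (N : R) : phiBelow n N 0 = single 1 (N ^ n) := by
  simp [phiBelow]

theorem phiBelow_self (N : R) :
    phiBelow n N n = ∑ σ : Perm (Fin n), single σ (N ^ cycleCount σ) := by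
  simp [phiBelow]

theorem smul_phiBelow_succ (N : R) (k : Fin n) :
    N • phiBelow n N (k + 1) = phiBelow n N k * (single 1 N + jucysMurphy R k) := by
  have hmaps : ∀ σ ∈ permsBelow n (k + 1), σ⁻¹ k ∈ Iic k := fun σ hσ ↦
    mem_Iic.mpr (inv_apply_le_of_mem_permsBelow_succ hσ)
  have hfiber : {σ ∈ permsBelow n (k + 1) | σ⁻¹ k = k} = permsBelow n k := by
    ext σ
    exact mem_filter.trans mem_permsBelow_succ_and_inv_apply_eq_self_iff
  rw [phiBelow, phiBelow, smul_sum, ← sum_fiberwise_of_maps_to hmaps, ← Iio_insert,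
    sum_insert notMem_Iio_self, mul_add, jucysMurphy, mul_sum, hfiber, sum_mul]
  simp only [smul_single', sum_mul, single_mul_single, mul_one]
  congr 1
  · exact sum_congr rfl fun σ _ ↦ by rw [mul_comm]
  · exact sum_congr rfl fun i hi ↦ sum_mul_swap_permsBelow N (mem_Iio.mp hi)

end Factorization

theorem isUnit_single_one_add_jucysMurphy {𝕜 : Type*} [NormedField 𝕜] {n : ℕ} (k : Fin n)
    {c : 𝕜} (hc : (k : ℝ) < ‖c‖) : IsUnit (single 1 c + jucysMurphy 𝕜 k) :=
  isUnit_single_one_add_sum_single (by simpa using hc)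

/-- For `N > n`, the element `Φ^N = Σ_{σ ∈ S_n} N^{♯σ}·σ` of the group algebra
`ℂ[S_n]` is invertible. -/
theorem phi_isUnit (n N : ℕ) (hN : N > n) :
    IsUnit (∑ σ : Equiv.Perm (Fin n),
      MonoidAlgebra.single (R := ℂ) σ ((N : ℂ) ^ cycleCount σ)) := by
  have hN₀ : (N : ℂ) ≠ 0 := by exact_mod_cast (by omega : N ≠ 0)
  have hpartial : ∀ m ≤ n, IsUnit (phiBelow n (N : ℂ) m) := by
    intro m hm
    induction m with
    | zero =>
      rw [phiBelow_zero]
      exact (isUnit_iff_ne_zero.mpr (pow_ne_zero n hN₀)).map singleOneRingHom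
    | succ m ih =>
      rw [← isUnit_smul_iff (Units.mk0 _ hN₀), Units.smul_mk0, smul_phiBelow_succ _ ⟨m, hm⟩]
      refine (ih (by omega)).mul (isUnit_single_one_add_jucysMurphy _ ?_)
      simp only [Complex.norm_natCast]
      exact_mod_cast (by omega : m < N)
  simpa [phiBelow_self] using hpartial n le_rfl
end

section
/- For n < N, the n! functions χ_σ : (M_N(ℂ))ⁿ → ℂ defined by χ_σ(A₁,…,Aₙ) = Σ_{i₁,…,iₙ=1}^N (A₁)_{i₁ σ(i₁)} (A₂)_{i₂ σ(i₂)} ⋯ (Aₙ)_{iₙ σ(iₙ)}, for σ ∈ S_n, are linearly independent. -/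
/-- For `σ ∈ S_n`, the invariant function
`χ_σ(A₁,…,Aₙ) = Σ_{i₁,…,iₙ} (A₁)_{i₁σ(i₁)}⋯(Aₙ)_{iₙσ(iₙ)}` on `(M_N(ℂ))ⁿ`. -/
noncomputable def chi {n N : ℕ} (σ : Equiv.Perm (Fin n)) :
    (Fin n → Matrix (Fin N) (Fin N) ℂ) → ℂ :=
  fun A => ∑ i : Fin n → Fin N, ∏ t : Fin n, A t (i t) (i (σ t))

/-!
Evaluate at the tuples of matrix units `A_t = E_{e(t), e(τ t)}`, `τ ∈ S_n`, for an injection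
`e : Fin n → Fin N` (which exists since `n < N`). A summand of `χ_σ` at such a tuple is nonzero
only for the index `i = e`, and then only if `σ = τ`. So `χ_σ` takes the value `δ_{στ}` at these
`n!` points, which forces linear independence.
-/

open Equiv Function Matrix

theorem prod_single_apply_eq_ite {ι m R : Type*} [Fintype ι] [DecidableEq ι] [DecidableEq m]
    [CommSemiring R] {e : ι → m} (he : Injective e) (σ τ : Perm ι) (i : ι → m) :
    ∏ t, single (e t) (e (τ t)) (1 : R) (i t) (i (σ t)) = if i = e ∧ τ = σ then 1 else 0 := by
  simp only [single, of_apply, Finset.prod_boole, Finset.mem_univ, forall_const]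
  congr 1
  refine propext ⟨fun hall => ?_, ?_⟩
  · have hie : i = e := funext fun t => (hall t).1.symm
    subst hie
    exact ⟨rfl, Equiv.ext fun t => he (hall t).2⟩
  · rintro ⟨rfl, rfl⟩ t
    exact ⟨rfl, rfl⟩

theorem chi_single_apply {n N : ℕ} {e : Fin n → Fin N} (he : Injective e)
    (σ τ : Perm (Fin n)) :
    chi σ (fun t => single (e t) (e (τ t)) (1 : ℂ)) = if τ = σ then 1 else 0 := by
  rw [chi]
  simp only [prod_single_apply_eq_ite he, ite_and, Fintype.sum_ite_eq']

/-- For `n < N`, the `n!` functions `χ_σ`, `σ ∈ S_n`, are linearly independent. -/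
theorem chi_linearIndependent (n N : ℕ) (h : n < N) :
    LinearIndependent ℂ (fun σ : Equiv.Perm (Fin n) => (chi (N := N) σ)) := by
  let e : Fin n → Fin N := Fin.castLE h.le
  let evalAtUnits : ((Fin n → Matrix (Fin N) (Fin N) ℂ) → ℂ) →ₗ[ℂ] Perm (Fin n) → ℂ :=
    LinearMap.pi fun τ => LinearMap.proj fun t => single (e t) (e (τ t)) 1
  refine LinearIndependent.of_comp evalAtUnits ?_
  convert (Pi.basisFun ℂ (Perm (Fin n))).linearIndependent using 1
  ext σ τ
  rw [Pi.basisFun_apply, Pi.single_apply]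
  exact chi_single_apply (Fin.castLE_injective h.le) σ τ
end

section
/- With respect to the Gaussian measure dμ = C e^{−Tr(A₁*A₁) − ⋯ − Tr(Aₙ*Aₙ)} on (M_N(ℂ))ⁿ normalized so that each matrix entry function has L² norm 1 (equivalently, all entries of all matrices are i.i.d. standard complex Gaussians), the inner product of the invariant functions satisfies ⟨χ_σ, χ_μ⟩ = N^{♯(σ⁻¹μ)} for all σ, μ ∈ S_n. -/
open MeasureTheory ProbabilityTheory

/-- The standard complex Gaussian measure on `ℂ` (mean `0`, `E[|z|²] = 1`,
`E[z²] = 0`): the law of `x + iy` with `x, y` independent real Gaussians of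
variance `1/2`. -/
noncomputable def stdComplexGaussian : Measure ℂ :=
  ((gaussianReal 0 (1 / 2)).prod (gaussianReal 0 (1 / 2))).map
    Complex.measurableEquivRealProd.symm

instance : IsProbabilityMeasure stdComplexGaussian :=
  Measure.isProbabilityMeasure_map Complex.measurableEquivRealProd.symm.measurable.aemeasurable

/-- The Gaussian measure on `(M_N(ℂ))ⁿ` whose matrix entries are i.i.d. standard
complex Gaussians; a point is a function `(t, i, j) ↦ (A_t)_{ij}`. -/
noncomputable def gaussianMatrixMeasure (n N : ℕ) :
    Measure ((Fin n × Fin N × Fin N) → ℂ) :=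
  Measure.pi fun _ => stdComplexGaussian

/-- `χ_σ(A₁,…,Aₙ) = Σ_{i₁,…,iₙ} (A₁)_{i₁σ(i₁)}⋯(Aₙ)_{iₙσ(iₙ)}`, as a function of
the family of matrix entries. -/
noncomputable def chiE {n N : ℕ} (σ : Equiv.Perm (Fin n))
    (a : (Fin n × Fin N × Fin N) → ℂ) : ℂ :=
  ∑ i : Fin n → Fin N, ∏ t : Fin n, a (t, i t, i (σ t))

/-!
Expanding both sums, `⟨χ_σ, χ_μ⟩` is a double sum, over index tuples `i, j`, of inner products
of monomials `∏_{k ∈ S} a_k` in distinct entries. Since the entries are independent, centred and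
of unit second moment, such monomials are orthonormal, so the double sum counts the pairs whose
monomials use the same set of entries. This happens exactly when `i = j` and `i ∘ σ = i ∘ μ`,
i.e. when `i` is constant on the cycles of `μσ⁻¹`, a conjugate of `σ⁻¹μ`; there are
`N ^ ♯(σ⁻¹μ)` such `i`.
-/

open Finset ComplexConjugate

section StdComplexGaussian

open Complex

lemma integral_sq_gaussianReal_zero (v : NNReal) : ∫ x, x ^ 2 ∂gaussianReal 0 v = v := by
  rw [← variance_of_integral_eq_zero aemeasurable_id' integral_id_gaussianReal]
  simp

lemma integral_stdComplexGaussian {E : Type*} [NormedAddCommGroup E] [NormedSpace ℝ E]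
    (f : ℂ → E) :
    ∫ z, f z ∂stdComplexGaussian =
      ∫ p : ℝ × ℝ, f (p.1 + p.2 * I) ∂(gaussianReal 0 (1 / 2)).prod (gaussianReal 0 (1 / 2)) := by
  rw [stdComplexGaussian, integral_map_equiv]
  simp [measurableEquivRealProd, equivRealProdCLM_symm_apply]

lemma integrable_stdComplexGaussian_iff {E : Type*} [NormedAddCommGroup E] (f : ℂ → E) :
    Integrable f stdComplexGaussian ↔
      Integrable (fun p : ℝ × ℝ => f (p.1 + p.2 * I))
        ((gaussianReal 0 (1 / 2)).prod (gaussianReal 0 (1 / 2))) := by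
  rw [stdComplexGaussian, integrable_map_equiv]
  simp [Function.comp_def, measurableEquivRealProd, equivRealProdCLM_symm_apply]

lemma memLp_id_stdComplexGaussian : MemLp id 2 stdComplexGaussian := by
  rw [memLp_two_iff_integrable_sq_norm aestronglyMeasurable_id,
    integrable_stdComplexGaussian_iff]
  simp only [id, Complex.sq_norm, normSq_add_mul_I]
  have h : Integrable (fun x : ℝ => x ^ 2) (gaussianReal 0 (1 / 2)) :=
    (memLp_id_gaussianReal 2).integrable_sq
  exact (h.comp_fst _).add (h.comp_snd _)

lemma integral_id_stdComplexGaussian : ∫ z, z ∂stdComplexGaussian = 0 := by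
  have h : Integrable (fun x : ℝ => (x : ℂ)) (gaussianReal 0 (1 / 2)) :=
    ((memLp_id_gaussianReal 1).integrable le_rfl).ofReal
  rw [integral_stdComplexGaussian, integral_add (h.comp_fst _) ((h.comp_snd _).mul_const _),
    integral_mul_const, integral_fun_fst, integral_fun_snd, integral_complex_ofReal]
  simp

lemma integral_sq_norm_stdComplexGaussian : ∫ z, ‖z‖ ^ 2 ∂stdComplexGaussian = 1 := by
  have h : Integrable (fun x : ℝ => x ^ 2) (gaussianReal 0 (1 / 2)) :=
    (memLp_id_gaussianReal 2).integrable_sq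
  rw [integral_stdComplexGaussian]
  simp only [Complex.sq_norm, normSq_add_mul_I]
  rw [integral_add (h.comp_fst _) (h.comp_snd _), integral_fun_fst (fun x : ℝ => x ^ 2),
    integral_fun_snd (fun x : ℝ => x ^ 2),
    integral_sq_gaussianReal_zero]
  norm_num

end StdComplexGaussian

section Monomials

variable {ν : Measure ℂ} [IsProbabilityMeasure ν]

lemma integrable_ite_mul_conj_ite (hν : MemLp id 2 ν) (p q : Prop) [Decidable p] [Decidable q] :
    Integrable (fun z => (if p then z else 1) * conj (if q then z else 1)) ν := by
  have hid : Integrable (fun z : ℂ => z) ν := hν.integrable one_le_two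
  by_cases hp : p <;> by_cases hq : q <;> simp only [hp, hq, if_true, if_false, map_one, mul_one,
    one_mul]
  · simp_rw [Complex.mul_conj', ← Complex.ofReal_pow]
    exact (hν.integrable_norm_pow two_ne_zero).ofReal
  · exact hid
  · exact Complex.conjCLE.toContinuousLinearMap.integrable_comp hid
  · exact integrable_const 1

lemma integral_ite_mul_conj_ite (hmean : ∫ z, z ∂ν = 0) (hvar : ∫ z, ‖z‖ ^ 2 ∂ν = 1)
    (p q : Prop) [Decidable p] [Decidable q] :
    ∫ z, (if p then z else 1) * conj (if q then z else 1) ∂ν = if p ↔ q then 1 else 0 := by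
  by_cases hp : p <;> by_cases hq : q <;> simp only [hp, hq, if_true, if_false, iff_self,
    iff_false, false_iff, not_true, map_one, mul_one, one_mul]
  · simp_rw [Complex.mul_conj', ← Complex.ofReal_pow, integral_complex_ofReal, hvar,
      Complex.ofReal_one]
  · exact hmean
  · rw [integral_conj, hmean, map_zero]
  · simp

variable {κ : Type*} [Fintype κ] [DecidableEq κ]

lemma prod_mul_conj_prod_eq_prod_ite (S T : Finset κ) (a : κ → ℂ) :
    (∏ k ∈ S, a k) * conj (∏ k ∈ T, a k) =
      ∏ k, (if k ∈ S then a k else 1) * conj (if k ∈ T then a k else 1) := by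
  rw [← Fintype.prod_ite_mem S, ← Fintype.prod_ite_mem T, map_prod, prod_mul_distrib]

lemma integrable_prod_mul_conj_prod (hν : MemLp id 2 ν) (S T : Finset κ) :
    Integrable (fun a : κ → ℂ => (∏ k ∈ S, a k) * conj (∏ k ∈ T, a k))
      (Measure.pi fun _ => ν) := by
  simp_rw [prod_mul_conj_prod_eq_prod_ite]
  exact Integrable.fintype_prod fun k => integrable_ite_mul_conj_ite hν (k ∈ S) (k ∈ T)

lemma integral_prod_mul_conj_prod (hmean : ∫ z, z ∂ν = 0) (hvar : ∫ z, ‖z‖ ^ 2 ∂ν = 1)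
    (S T : Finset κ) :
    ∫ a : κ → ℂ, (∏ k ∈ S, a k) * conj (∏ k ∈ T, a k) ∂(Measure.pi fun _ => ν) =
      if S = T then 1 else 0 := by
  simp_rw [prod_mul_conj_prod_eq_prod_ite]
  rw [integral_fintype_prod_eq_prod (fun k z => (if k ∈ S then z else 1) *
    conj (if k ∈ T then z else 1))]
  simp_rw [integral_ite_mul_conj_ite hmean hvar, prod_boole, mem_univ, true_imp_iff,
    ← Finset.ext_iff]

theorem integral_sum_prod_mul_conj_sum_prod {ι ι' : Type*} [Fintype ι] [Fintype ι']
    (hν : MemLp id 2 ν) (hmean : ∫ z, z ∂ν = 0) (hvar : ∫ z, ‖z‖ ^ 2 ∂ν = 1)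
    (S : ι → Finset κ) (T : ι' → Finset κ) :
    ∫ a : κ → ℂ, (∑ i, ∏ k ∈ S i, a k) * conj (∑ j, ∏ k ∈ T j, a k) ∂(Measure.pi fun _ => ν) =
      #{p : ι × ι' | S p.1 = T p.2} := by
  have hint i j := integrable_prod_mul_conj_prod hν (S i) (T j)
  simp_rw [map_sum, sum_mul_sum]
  rw [integral_finsetSum _ fun i _ => integrable_finsetSum _ fun j _ => hint i j]
  simp_rw [integral_finsetSum _ fun j _ => hint _ j, integral_prod_mul_conj_prod hmean hvar,
    ← Fintype.sum_prod_type', sum_boole]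

end Monomials

namespace Equiv.Perm

lemma SameCycle.apply_eq_apply_of_comp_eq_self {α β : Type*} [Finite α] {π : Perm α}
    {i : α → β} (hi : i ∘ π = i) {x y : α} (h : π.SameCycle x y) : i x = i y := by
  have hpow (k : ℕ) : i ((π ^ k) x) = i x := by
    induction k with
    | zero => rfl
    | succ k ih => rw [pow_succ', mul_apply, ← ih]; exact congrFun hi _
  obtain ⟨k, rfl⟩ := h.exists_nat_pow_eq
  exact (hpow k).symm

variable {α : Type*} [Fintype α] [DecidableEq α] (π : Perm α)

def cycleFactorOrFixedPoint (x : α) : π.cycleFactorsFinset ⊕ {x // x ∉ π.support} :=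
  if hx : x ∈ π.support then .inl ⟨π.cycleOf x, cycleOf_mem_cycleFactorsFinset_iff.2 hx⟩
  else .inr ⟨x, hx⟩

variable {π}

lemma cycleFactorOrFixedPoint_eq_iff {x y : α} :
    π.cycleFactorOrFixedPoint x = π.cycleFactorOrFixedPoint y ↔ π.SameCycle x y := by
  unfold cycleFactorOrFixedPoint
  by_cases hx : x ∈ π.support <;> by_cases hy : y ∈ π.support
  · simp [hx, hy, sameCycle_iff_cycleOf_eq_of_mem_support hx hy]
  · simpa [hx, hy] using fun h : π.SameCycle x y => hy (h.mem_support_iff.1 hx)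
  · simpa [hx, hy] using fun h : π.SameCycle x y => hx (h.mem_support_iff.2 hy)
  · simp only [hx, hy, dite_false, Sum.inr.injEq, Subtype.mk.injEq]
    exact ⟨fun h => h ▸ SameCycle.refl π x, fun h => h.eq_of_left (notMem_support.1 hx)⟩

variable (π)

lemma cycleFactorOrFixedPoint_surjective : Function.Surjective π.cycleFactorOrFixedPoint := by
  rintro (⟨c, hc⟩ | ⟨x, hx⟩)
  · obtain ⟨x, hxc⟩ := (mem_cycleFactorsFinset_iff.1 hc).1.nonempty_support
    have hx : x ∈ π.support := mem_cycleFactorsFinset_support_le hc hxc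
    refine ⟨x, ?_⟩
    simp [cycleFactorOrFixedPoint, hx, cycle_is_cycleOf hxc hc]
  · exact ⟨x, by simp [cycleFactorOrFixedPoint, hx]⟩

lemma card_parts_partition :
    π.partition.parts.card = Fintype.card (π.cycleFactorsFinset ⊕ {x // x ∉ π.support}) := by
  rw [parts_partition, Multiset.card_add, Multiset.card_replicate, cycleType_def,
    Multiset.card_map, Fintype.card_sum, Fintype.card_subtype_compl, Fintype.card_coe,
    Fintype.card_coe]
  rfl

lemma card_comp_eq_self {β : Type*} [Fintype β] [DecidableEq β] :
    #{i : α → β | i ∘ π = i} = Fintype.card β ^ π.partition.parts.card := by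
  have hsurj := cycleFactorOrFixedPoint_surjective π
  have himage : ({i : α → β | i ∘ π = i} : Finset _) =
      univ.image fun f => f ∘ π.cycleFactorOrFixedPoint := by
    ext i
    simp only [mem_filter, mem_univ, true_and, mem_image]
    constructor
    · intro hi
      refine ⟨i ∘ Function.surjInv hsurj, funext fun x => ?_⟩
      exact (cycleFactorOrFixedPoint_eq_iff.1
        (Function.surjInv_eq hsurj _)).apply_eq_apply_of_comp_eq_self hi
    · rintro ⟨f, rfl⟩
      exact funext fun x =>
        congrArg f (cycleFactorOrFixedPoint_eq_iff.2 (sameCycle_apply_left.2 .rfl))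
  rw [himage, card_image_of_injective _ hsurj.injective_comp_right, card_univ, Fintype.card_fun,
    card_parts_partition]

lemma card_comp_eq_comp {β : Type*} [Fintype β] [DecidableEq β] (σ μ : Perm α) :
    #{i : α → β | i ∘ σ = i ∘ μ} = Fintype.card β ^ (σ⁻¹ * μ).partition.parts.card := by
  have hconj : IsConj (σ⁻¹ * μ) (μ * σ⁻¹) := isConj_iff.2 ⟨σ, by group⟩
  rw [partition_eq_of_isConj.1 hconj, ← card_comp_eq_self]
  refine congrArg card (filter_congr fun i _ => ?_)
  rw [coe_mul, inv_def, ← Function.comp_assoc, Equiv.comp_symm_eq, eq_comm]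

end Equiv.Perm

def Function.Embedding.graph {α γ : Type*} (f : α → γ) : α ↪ α × γ :=
  ⟨fun t => (t, f t), fun _ _ h => congrArg Prod.fst h⟩

@[simp]
lemma Function.Embedding.graph_apply {α γ : Type*} (f : α → γ) (t : α) :
    Function.Embedding.graph f t = (t, f t) :=
  rfl

section ChiEntries

open Equiv

variable {α β : Type*} [Fintype α]

def chiEntries (σ : Perm α) (i : α → β) : Finset (α × β × β) :=
  univ.map (.graph fun t => (i t, i (σ t)))

lemma chiE_eq_sum_prod_chiEntries {n N : ℕ} (σ : Perm (Fin n)) (a : Fin n × Fin N × Fin N → ℂ) :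
    chiE σ a = ∑ i, ∏ k ∈ chiEntries σ i, a k := by
  simp only [chiE, chiEntries, prod_map, Function.Embedding.graph_apply]

lemma chiEntries_eq_chiEntries_iff {σ μ : Perm α} {i j : α → β} :
    chiEntries σ i = chiEntries μ j ↔ i = j ∧ i ∘ σ = i ∘ μ := by
  constructor
  · intro h
    have hmem t : (t, i t, i (σ t)) ∈ chiEntries μ j := h ▸ mem_map_of_mem _ (mem_univ t)
    simp only [chiEntries, mem_map, mem_univ, true_and, Function.Embedding.graph_apply,
      Prod.mk.injEq, exists_eq_left] at hmem
    obtain rfl : i = j := funext fun t => (hmem t).1.symm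
    exact ⟨rfl, funext fun t => (hmem t).2.symm⟩
  · rintro ⟨rfl, h⟩
    simp only [chiEntries]
    congr 2
    funext t
    rw [← Function.comp_apply (f := i), h, Function.comp_apply]

lemma card_chiEntries_eq [Fintype β] [DecidableEq α] [DecidableEq β] (σ μ : Perm α) :
    #{p : (α → β) × (α → β) | chiEntries σ p.1 = chiEntries μ p.2} =
      #{i : α → β | i ∘ σ = i ∘ μ} := by
  refine card_nbij' Prod.fst (fun i => (i, i)) ?_ ?_ ?_ ?_ <;>
    simp [Set.MapsTo, Set.LeftInvOn, Set.RightInvOn, chiEntries_eq_chiEntries_iff]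

end ChiEntries

lemma cycleCount_eq_card_parts_partition {n : ℕ} (π : Equiv.Perm (Fin n)) :
    cycleCount π = π.partition.parts.card := by
  simp [cycleCount, Equiv.Perm.parts_partition]

/-- With respect to the Gaussian measure on `(M_N(ℂ))ⁿ` whose entries are i.i.d.
standard complex Gaussians, `⟨χ_σ, χ_μ⟩ = N^{♯(σ⁻¹μ)}` for all `σ, μ ∈ S_n`. -/
theorem chi_inner_product (n N : ℕ) (σ μ : Equiv.Perm (Fin n)) :
    ∫ a, chiE (N := N) σ a * (starRingEnd ℂ) (chiE (N := N) μ a)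
        ∂(gaussianMatrixMeasure n N)
      = (N : ℂ) ^ cycleCount (σ⁻¹ * μ) := by
  simp_rw [chiE_eq_sum_prod_chiEntries]
  rw [gaussianMatrixMeasure, integral_sum_prod_mul_conj_sum_prod memLp_id_stdComplexGaussian
    integral_id_stdComplexGaussian integral_sq_norm_stdComplexGaussian, card_chiEntries_eq,
    Equiv.Perm.card_comp_eq_comp, cycleCount_eq_card_parts_partition, Fintype.card_fin]
  norm_cast
end

section
/- For Haar measure on U(N), ∫_{U(N)} |Tr(U)|² dU = 1, where Tr denotes the non-normalized trace. -/
open MeasureTheory Matrix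

noncomputable instance unitaryGroupMeasurableSpace (N : ℕ) :
    MeasurableSpace (Matrix.unitaryGroup (Fin N) ℂ) := borel _

/-!
Left multiplication by the diagonal matrix that negates row `i` changes the sign of
`U i j * conj (U k l)` when `k ≠ i`, so under a left-invariant measure these cross terms integrate
to zero. Left multiplication by a permutation matrix permutes the rows, so `∫ |U i j|²` does not
depend on `i`; since the columns of `U` are unit vectors, it equals `1 / N`. Expanding
`|Tr U|² = ∑ i k, U i i * conj (U k k)` then gives `N · (1 / N) = 1`.
-/

open ComplexConjugate

namespace Matrix

variable {n α : Type*} [Fintype n] [DecidableEq n] [CommRing α] [StarRing α]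

theorem permMatrix_mem_unitaryGroup (σ : Equiv.Perm n) : σ.permMatrix α ∈ unitaryGroup n α := by
  rw [mem_unitaryGroup_iff', star_eq_conjTranspose, conjTranspose_permMatrix, ← permMatrix_mul,
    mul_inv_cancel, permMatrix_one]

theorem diagonal_mem_unitaryGroup {d : n → α} (hd : ∀ k, star (d k) * d k = 1) :
    diagonal d ∈ unitaryGroup n α := by
  rw [mem_unitaryGroup_iff', star_eq_conjTranspose, diagonal_conjTranspose, diagonal_mul_diagonal,
    ← diagonal_one]
  exact congrArg diagonal (funext hd)

theorem UnitaryGroup.sum_star_apply_mul_apply (U : unitaryGroup n α) (j : n) :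
    ∑ k, star ((U : Matrix n n α) k j) * (U : Matrix n n α) k j = 1 := by
  have h := congrFun (congrFun (UnitaryGroup.star_mul_self U) j) j
  rw [Matrix.mul_apply, one_apply_eq] at h
  simpa only [star_apply] using h

end Matrix

namespace Matrix.UnitaryGroup

variable {n 𝕜 : Type*} [Fintype n] [DecidableEq n] [RCLike 𝕜]
  [MeasurableSpace (unitaryGroup n 𝕜)] [BorelSpace (unitaryGroup n 𝕜)]
  (μ : Measure (unitaryGroup n 𝕜))

theorem integrable_apply_mul_conj_apply [IsFiniteMeasure μ] (i j k l : n) :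
    Integrable (fun U : unitaryGroup n 𝕜 => (U : Matrix n n 𝕜) i j * conj ((U : Matrix n n 𝕜) k l))
      μ := by
  refine Integrable.of_bound (C := 1) (Continuous.aestronglyMeasurable ?_) (.of_forall fun U => ?_)
  · have hval := continuous_subtype_val (p := (· ∈ unitaryGroup n 𝕜))
    exact (hval.matrix_elem i j).mul (RCLike.continuous_conj.comp (hval.matrix_elem k l))
  · rw [norm_mul, RCLike.norm_conj]
    exact mul_le_one₀ (entry_norm_bound_of_unitary U.2 i j) (norm_nonneg _)
      (entry_norm_bound_of_unitary U.2 k l)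

variable [μ.IsMulLeftInvariant]

theorem integral_apply_mul_conj_apply_eq_zero {i k : n} (hik : i ≠ k) (j l : n) :
    ∫ U, (U : Matrix n n 𝕜) i j * conj ((U : Matrix n n 𝕜) k l) ∂μ = 0 := by
  let g : unitaryGroup n 𝕜 := ⟨diagonal (Function.update 1 i (-1)), diagonal_mem_unitaryGroup
    fun m => by rcases eq_or_ne m i with rfl | hm <;> simp [*]⟩
  have h := integral_mul_left_eq_self (μ := μ)
    (fun U => (U : Matrix n n 𝕜) i j * conj ((U : Matrix n n 𝕜) k l)) g
  simp only [Submonoid.coe_mul, diagonal_mul, Function.update_self, neg_mul, one_mul, ne_eq,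
    hik.symm, not_false_eq_true, Function.update_of_ne, Pi.one_apply, integral_neg, g] at h
  linear_combination -h / 2

theorem integral_apply_mul_conj_apply_perm (σ : Equiv.Perm n) (i j k l : n) :
    ∫ U, (U : Matrix n n 𝕜) (σ i) j * conj ((U : Matrix n n 𝕜) (σ k) l) ∂μ =
      ∫ U, (U : Matrix n n 𝕜) i j * conj ((U : Matrix n n 𝕜) k l) ∂μ := by
  let g : unitaryGroup n 𝕜 := ⟨σ.permMatrix 𝕜, permMatrix_mem_unitaryGroup σ⟩
  have h := integral_mul_left_eq_self (μ := μ)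
    (fun U => (U : Matrix n n 𝕜) i j * conj ((U : Matrix n n 𝕜) k l)) g
  simpa [g, PEquiv.toMatrix_toPEquiv_mul] using h

variable [IsProbabilityMeasure μ]

theorem card_mul_integral_apply_mul_conj_apply (i j : n) :
    Fintype.card n * ∫ U, (U : Matrix n n 𝕜) i j * conj ((U : Matrix n n 𝕜) i j) ∂μ = 1 := by
  have hcol (U : unitaryGroup n 𝕜) :
      ∑ k, (U : Matrix n n 𝕜) k j * conj ((U : Matrix n n 𝕜) k j) = 1 := by
    simpa only [mul_comm, RCLike.star_def] using sum_star_apply_mul_apply U j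
  have hrow (k : n) : ∫ U, (U : Matrix n n 𝕜) k j * conj ((U : Matrix n n 𝕜) k j) ∂μ =
      ∫ U, (U : Matrix n n 𝕜) i j * conj ((U : Matrix n n 𝕜) i j) ∂μ := by
    simpa using integral_apply_mul_conj_apply_perm μ (Equiv.swap i k) i j i j
  calc _ = ∑ k, ∫ U, (U : Matrix n n 𝕜) k j * conj ((U : Matrix n n 𝕜) k j) ∂μ := by
        simp [hrow]
    _ = 1 := by
      rw [← integral_finsetSum _ fun k _ => integrable_apply_mul_conj_apply μ k j k j]
      simp [hcol]

theorem integral_trace_mul_conj_trace [Nonempty n] :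
    ∫ U, trace (U : Matrix n n 𝕜) * conj (trace (U : Matrix n n 𝕜)) ∂μ = 1 := by
  have hcard : (Fintype.card n : 𝕜) ≠ 0 := Nat.cast_ne_zero.2 Fintype.card_ne_zero
  calc _ = ∑ i, ∑ k, ∫ U, (U : Matrix n n 𝕜) i i * conj ((U : Matrix n n 𝕜) k k) ∂μ := by
        simp_rw [trace, diag, map_sum, Finset.sum_mul_sum]
        rw [integral_finsetSum _ fun i _ => integrable_finsetSum _ fun k _ =>
          integrable_apply_mul_conj_apply μ i i k k]
        simp_rw [integral_finsetSum _ fun k _ => integrable_apply_mul_conj_apply μ _ _ k k]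
    _ = ∑ i, ∫ U, (U : Matrix n n 𝕜) i i * conj ((U : Matrix n n 𝕜) i i) ∂μ :=
        Finset.sum_congr rfl fun i _ => Finset.sum_eq_single i
          (fun k _ hki => integral_apply_mul_conj_apply_eq_zero μ (Ne.symm hki) i k) (by simp)
    _ = ∑ _ : n, (Fintype.card n : 𝕜)⁻¹ := Finset.sum_congr rfl fun i _ =>
        eq_inv_of_mul_eq_one_right (card_mul_integral_apply_mul_conj_apply μ i i)
    _ = 1 := by simp [hcard]

end Matrix.UnitaryGroup

instance unitaryGroupBorelSpace (N : ℕ) : BorelSpace (unitaryGroup (Fin N) ℂ) := ⟨rfl⟩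

/-- For the Haar probability measure on `U(N)`: `∫ |Tr(U)|² dU = 1`. -/
theorem trace_abs_sq_integral (N : ℕ) (hN : 1 ≤ N)
    (μ : Measure (Matrix.unitaryGroup (Fin N) ℂ)) [IsProbabilityMeasure μ]
    (hinv : ∀ g : Matrix.unitaryGroup (Fin N) ℂ,
      μ.map (fun U => g * U) = μ) :
    ∫ U, Matrix.trace (U : Matrix (Fin N) (Fin N) ℂ) *
          (starRingEnd ℂ) (Matrix.trace (U : Matrix (Fin N) (Fin N) ℂ)) ∂μ
      = 1 := by
  have : μ.IsMulLeftInvariant := ⟨hinv⟩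
  have : Nonempty (Fin N) := ⟨⟨0, hN⟩⟩
  exact UnitaryGroup.integral_trace_mul_conj_trace μ
end
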